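/- Let R be an associative ring with 1, n ≥ 3, and A, B two-sided ideals. For distinct i, j and a ∈ A, b ∈ B, the elementary commutator y_{ij}(a,b) = [t_{ij}(a), t_{ji}(b)] lies in the principal congruence subgroup GL(n,R, A∘B), where A∘B = AB + BA. -/

import Mathlib

open Matrix
open scoped commutatorElement

/-- `GL(n,R)` over an associative ring `R` with `1`, as units of the matrix ring. -/
abbrev GLn (n : ℕ) (R : Type*) [Ring R] := (Matrix (Fin n) (Fin n) R)ˣ

/-- The elementary transvection `t_{ij}(c) = e + c·e_{ij}`, for `i ≠ j`. -/
def t {R : Type*} [Ring R] {n : ℕ} (i j : Fin n) (hij : i ≠ j) (c : R) :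
    GLn n R :=
  ⟨1 + Matrix.single i j c, 1 - Matrix.single i j c,
   by
    have h0 : Matrix.single i j c * Matrix.single i j c = 0 :=
      Matrix.single_mul_single_of_ne (c := c) i j i hij.symm c
    noncomm_ring
    simp [h0],
   by
    have h0 : Matrix.single i j c * Matrix.single i j c = 0 :=
      Matrix.single_mul_single_of_ne (c := c) i j i hij.symm c
    noncomm_ring
    simp [h0]⟩

/-- The (unrelative) elementary subgroup `E(n,A)` generated by `t_{ij}(a)`, `a ∈ A`. -/
def E (R : Type*) [Ring R] (n : ℕ) (A : TwoSidedIdeal R) : Subgroup (GLn n R) :=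
  Subgroup.closure { g | ∃ i j, ∃ hij : i ≠ j, ∃ a ∈ A, g = t i j hij a }

/-- The symmetrised product `A∘B = AB + BA` of two-sided ideals. -/
def symProd {R : Type*} [Ring R] (A B : TwoSidedIdeal R) : TwoSidedIdeal R :=
  TwoSidedIdeal.span {x | ∃ a ∈ A, ∃ b ∈ B, x = a * b ∨ x = b * a}

private lemma sbneg {R : Type*} [Ring R] {n : ℕ} (i j : Fin n) (x : R) :
    single i j (-x) = -(single i j x) := by
  ext k l; simp [single]; split <;> simp

private lemma comm_eq {R : Type*} [Ring R] {n : ℕ} (i j : Fin n) (hij : i ≠ j) (a b : R) :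
    (1 + single i j a) * (1 + single j i b) *
      (1 - single i j a) * (1 - single j i b) =
    1 + single i i (a*b + a*b*(a*b)) + single j j (-(b*a))
      + single j i (b*(a*b)) + single i j (-(a*b*a)) := by
  have h1 : single i j a * single i j a = 0 :=
    single_mul_single_of_ne (c := a) i j i hij.symm a
  have h2 : single j i b * single j i b = 0 :=
    single_mul_single_of_ne (c := b) j i j hij b
  simp only [mul_add, add_mul, mul_sub, sub_mul, mul_one, one_mul,
    single_mul_single_same, h1, h2]
  noncomm_ring
  simp only [single_mul_single_same, (fun (x y : R) => (single_mul_single_of_ne (c := x) i i j hij y : single i i x * single j i y = 0)), h1, h2,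
    single_add, sbneg, smul_single, neg_smul, one_smul, zero_mul, mul_zero,
    smul_zero, zero_add, add_zero, smul_neg]
  abel

private lemma sb_entry_mem {R : Type*} [Ring R] {n : ℕ} (I : TwoSidedIdeal R)
    (p q k l : Fin n) {x : R} (hx : x ∈ I) : single p q x k l ∈ I := by
  simp only [single, of_apply]
  split
  · exact hx
  · exact I.zero_mem

theorem stmt11 {R : Type*} [Ring R] {n : ℕ} (hn : 3 ≤ n) (A B : TwoSidedIdeal R)
    (i j : Fin n) (hij : i ≠ j) (a b : R) (ha : a ∈ A) (hb : b ∈ B) (k l : Fin n) :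
    (⁅t i j hij a, t j i hij.symm b⁆ : GLn n R).val k l -
        (1 : Matrix (Fin n) (Fin n) R) k l ∈ symProd A B := by
  have hab : a * b ∈ symProd A B :=
    TwoSidedIdeal.subset_span ⟨a, ha, b, hb, Or.inl rfl⟩
  have hba : b * a ∈ symProd A B :=
    TwoSidedIdeal.subset_span ⟨a, ha, b, hb, Or.inr rfl⟩
  have key : (⁅t i j hij a, t j i hij.symm b⁆ : GLn n R).val =
      1 + single i i (a*b + a*b*(a*b)) + single j j (-(b*a))
        + single j i (b*(a*b)) + single i j (-(a*b*a)) := by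
    show (1 + single i j a) * (1 + single j i b) *
        (1 - single i j a) * (1 - single j i b) = _
    exact comm_eq i j hij a b
  rw [key]
  simp only [Matrix.add_apply]
  have hrw : (1 : Matrix (Fin n) (Fin n) R) k l
      + single i i (a*b + a*b*(a*b)) k l + single j j (-(b*a)) k l
      + single j i (b*(a*b)) k l + single i j (-(a*b*a)) k l
      - (1 : Matrix (Fin n) (Fin n) R) k l
      = single i i (a*b + a*b*(a*b)) k l + single j j (-(b*a)) k l
      + single j i (b*(a*b)) k l + single i j (-(a*b*a)) k l := by abel
  rw [hrw]
  refine (symProd A B).add_mem (((symProd A B).add_mem ((symProd A B).add_mem ?_ ?_) ?_)) ?_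
  · exact sb_entry_mem _ _ _ _ _
      ((symProd A B).add_mem hab ((symProd A B).mul_mem_right _ _ hab))
  · exact sb_entry_mem _ _ _ _ _ ((symProd A B).neg_mem hba)
  · exact sb_entry_mem _ _ _ _ _ ((symProd A B).mul_mem_left _ _ hab)
  · exact sb_entry_mem _ _ _ _ _ ((symProd A B).neg_mem ((symProd A B).mul_mem_right _ _ hab))
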